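/- arXiv:2005.06774 — 3 statements merged into one kernel-verified Lean document; each statement's English description precedes it below -/
import Mathlib

section
/- Let Ω ⊆ ℝ^N have finite measure and let p be a bounded variable exponent with p⁺ ≤ β p⁻ for some β > 1. Then for every 1 ≤ q ≤ p⁻ and every u ∈ L^{p(·)}(Ω), the classical L^q norm satisfies ‖u‖_q ≤ max{(ℒ^N(Ω))^{1/q − 1/p⁻}, (ℒ^N(Ω))^{β(1/q − 1/p⁺)}} · (1 + (q/p⁺)(β − 1))^{1/q} · ‖u‖_{p(·)}. In particular L^{p(·)}(Ω) embeds into L^q(Ω) for all 1 ≤ q ≤ p⁻. -/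
open MeasureTheory Filter

noncomputable def luxNorm {α : Type*} [MeasurableSpace α] (μ : Measure α) (p : α → ℝ)
    (u : α → ℝ) : ℝ :=
  sInf {l : ℝ | 0 < l ∧ ∫ x, (|u x| / l) ^ p x ∂μ ≤ 1}

/-! Fix `l` with `∫ (|u| / l) ^ p ≤ 1` and put `v = |u| / l`. Young's inequality with the exponents
`p(x) / q` and its conjugate, at a scale `s`, gives `v ^ q ≤ s ^ q ((q / p) s ^ (-p) v ^ p + 1 - q / p)`.
With `s = |Ω| ^ (-1 / p⁻)` if `|Ω| ≤ 1` and `s = |Ω| ^ (-1 / p⁺)` if `|Ω| ≥ 1`, the weight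
`s ^ (-p(x))` is at most `|Ω|`, so integration gives
`∫ v ^ q ≤ s ^ q |Ω| (q / p⁻ + 1 - q / p⁺) ≤ s ^ q |Ω| (1 + (q / p⁺)(β - 1))`.
Taking `q`-th roots and the infimum over `l` gives the bound. -/

lemma rpow_le_max_rpow_of_mem_Icc {c t a b : ℝ} (hc : 0 < c) (hat : a ≤ t) (htb : t ≤ b) :
    c ^ t ≤ max (c ^ a) (c ^ b) := by
  rcases le_total c 1 with h | h
  · exact le_max_of_le_left (Real.rpow_le_rpow_of_exponent_ge hc h hat)
  · exact le_max_of_le_right (Real.rpow_le_rpow_of_exponent_le h htb)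

-- Weighted AM-GM for `(t / s) ^ r` and `1` with weights `q / r` and `1 - q / r`.
lemma rpow_le_scaled_young {t s q r : ℝ} (ht : 0 ≤ t) (hs : 0 < s) (hq : 0 < q) (hqr : q ≤ r) :
    t ^ q ≤ s ^ q * (q / r * (s ^ r)⁻¹ * t ^ r + (1 - q / r)) := by
  have hr : 0 < r := hq.trans_le hqr
  have hts : 0 ≤ t / s := div_nonneg ht hs.le
  have hamgm := Real.geom_mean_le_arith_mean2_weighted (div_nonneg hq.le hr.le)
    (sub_nonneg.2 ((div_le_one hr).2 hqr)) (Real.rpow_nonneg hts r) zero_le_one (by ring)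
  rw [Real.one_rpow, mul_one, mul_one, ← Real.rpow_mul hts, mul_div_cancel₀ _ hr.ne',
    Real.div_rpow ht hs.le, Real.div_rpow ht hs.le, div_le_iff₀' (Real.rpow_pos_of_pos hs q)]
    at hamgm
  simpa only [div_eq_mul_inv, mul_comm, mul_left_comm, mul_assoc] using hamgm

lemma exists_rpow_scale {L a b q β : ℝ} (hL : 0 < L) (ha : 0 < a) (hab : a ≤ b) (hq : 0 < q)
    (hqb : q ≤ b) (hβ : 1 ≤ β) :
    ∃ s > 0, (∀ r, a ≤ r → r ≤ b → (s ^ r)⁻¹ ≤ L) ∧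
      s * L ^ (1 / q) ≤ max (L ^ (1 / q - 1 / a)) (L ^ (β * (1 / q - 1 / b))) := by
  have hb : 0 < b := ha.trans_le hab
  have hscale (c : ℝ) (hc : 0 < c) : L ^ (-(1 / c)) * L ^ (1 / q) = L ^ (1 / q - 1 / c) := by
    rw [← Real.rpow_add hL]; ring_nf
  have hinv (c r : ℝ) (hc : 0 < c) : ((L ^ (-(1 / c))) ^ r)⁻¹ = L ^ (r / c) := by
    rw [← Real.rpow_mul hL.le, ← Real.rpow_neg hL.le]; ring_nf
  -- `s = L ^ (-1 / c)` turns the weight into `(s ^ r)⁻¹ = L ^ (r / c)`, which is at most `L`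
  -- for `c = a` when `L ≤ 1` and for `c = b` when `1 ≤ L`.
  rcases le_total L 1 with hL1 | hL1
  · refine ⟨L ^ (-(1 / a)), Real.rpow_pos_of_pos hL _, fun r har _ => ?_, ?_⟩
    · rw [hinv a r ha]
      simpa using Real.rpow_le_rpow_of_exponent_ge hL hL1 ((one_le_div ha).2 har)
    · rw [hscale a ha]; exact le_max_left _ _
  · refine ⟨L ^ (-(1 / b)), Real.rpow_pos_of_pos hL _, fun r _ hrb => ?_, ?_⟩
    · rw [hinv b r hb]
      simpa using Real.rpow_le_rpow_of_exponent_le hL1 ((div_le_one hb).2 hrb)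
    · rw [hscale b hb]
      refine le_max_of_le_right (Real.rpow_le_rpow_of_exponent_le hL1 ?_)
      have : 0 ≤ 1 / q - 1 / b := sub_nonneg.2 (one_div_le_one_div_of_le hq hqb)
      nlinarith

lemma div_add_one_sub_div_le {q a b β : ℝ} (hq : 0 ≤ q) (ha : 0 < a) (hab : a ≤ b)
    (hbβ : b ≤ β * a) : q / a + 1 - q / b ≤ 1 + q / b * (β - 1) := by
  have : q / a ≤ q / b * β := by
    rw [div_mul_eq_mul_div, div_le_div_iff₀ ha (ha.trans_le hab)]
    nlinarith
  linarith

section Luxemburg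

variable {α : Type*} [MeasurableSpace α] {μ : Measure α} {p u : α → ℝ}

lemma luxNorm_zero_measure : luxNorm (0 : Measure α) p u = 0 := by
  simp only [luxNorm, integral_zero_measure, zero_le_one, and_true]
  exact csInf_Ioi

lemma le_mul_luxNorm {c C : ℝ} (hC : 0 < C) (hne : ∃ l, 0 < l ∧ ∫ x, (|u x| / l) ^ p x ∂μ ≤ 1)
    (h : ∀ l, 0 < l → ∫ x, (|u x| / l) ^ p x ∂μ ≤ 1 → c ≤ C * l) : c ≤ C * luxNorm μ p u := by
  rw [← div_le_iff₀' hC]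
  exact le_csInf hne fun l hl => (div_le_iff₀' hC).2 (h l hl.1 hl.2)

lemma exists_integral_div_rpow_le_one (hp : ∀ᵐ x ∂μ, 1 ≤ p x)
    (hu : Integrable (fun x => |u x| ^ p x) μ) :
    ∃ l, 0 < l ∧ ∫ x, (|u x| / l) ^ p x ∂μ ≤ 1 := by
  set I := ∫ x, |u x| ^ p x ∂μ
  set l := max 1 (I + 1)
  have hl1 : 1 ≤ l := le_max_left _ _
  have hl : 0 < l := one_pos.trans_le hl1
  refine ⟨l, hl, ?_⟩
  have hpt : ∀ᵐ x ∂μ, (|u x| / l) ^ p x ≤ l⁻¹ * |u x| ^ p x := by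
    filter_upwards [hp] with x hx
    rw [div_eq_mul_inv, Real.mul_rpow (abs_nonneg _) (inv_nonneg.2 hl.le), mul_comm]
    refine mul_le_mul_of_nonneg_right ?_ (Real.rpow_nonneg (abs_nonneg _) _)
    simpa using Real.rpow_le_rpow_of_exponent_ge (inv_pos.2 hl) (inv_le_one_of_one_le₀ hl1) hx
  calc ∫ x, (|u x| / l) ^ p x ∂μ ≤ ∫ x, l⁻¹ * |u x| ^ p x ∂μ :=
        integral_mono_of_nonneg (ae_of_all _ fun x => by positivity) (hu.const_mul _) hpt
    _ = l⁻¹ * I := integral_const_mul _ _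
    _ ≤ 1 := by
        rw [inv_mul_le_one₀ hl]
        linarith [le_max_right 1 (I + 1)]

lemma MeasureTheory.Integrable.div_rpow_of_ae_mem_Icc {a b l : ℝ} (hu : Measurable u)
    (hp : Measurable p) (hpa : ∀ᵐ x ∂μ, a ≤ p x) (hpb : ∀ᵐ x ∂μ, p x ≤ b) (hl : 0 < l)
    (hup : Integrable (fun x => |u x| ^ p x) μ) :
    Integrable (fun x => (|u x| / l) ^ p x) μ := by
  refine (hup.const_mul (max (l⁻¹ ^ a) (l⁻¹ ^ b))).mono'
    ((hu.abs.div_const l).pow hp).aestronglyMeasurable ?_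
  filter_upwards [hpa, hpb] with x hax hbx
  rw [Real.norm_of_nonneg (by positivity), div_eq_mul_inv,
    Real.mul_rpow (abs_nonneg _) (inv_nonneg.2 hl.le), mul_comm]
  exact mul_le_mul_of_nonneg_right (rpow_le_max_rpow_of_mem_Icc (inv_pos.2 hl) hax hbx)
    (Real.rpow_nonneg (abs_nonneg _) _)

lemma MeasureTheory.Integrable.abs_rpow_of_ae_le [IsFiniteMeasure μ] {q : ℝ} (hu : Measurable u)
    (hq : 0 ≤ q) (hqp : ∀ᵐ x ∂μ, q ≤ p x) (hup : Integrable (fun x => |u x| ^ p x) μ) :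
    Integrable (fun x => |u x| ^ q) μ := by
  refine ((integrable_const 1).add hup).mono' (hu.abs.pow_const q).aestronglyMeasurable ?_
  filter_upwards [hqp] with x hx
  rw [Real.norm_of_nonneg (by positivity), Pi.add_apply]
  rcases le_total |u x| 1 with h | h
  · linarith [Real.rpow_le_one (abs_nonneg _) h hq, Real.rpow_nonneg (abs_nonneg (u x)) (p x)]
  · linarith [Real.rpow_le_rpow_of_exponent_le h hx]

lemma integral_rpow_le_of_integral_rpow_le_one [IsFiniteMeasure μ] {f : α → ℝ} {q a b s : ℝ}
    (hf : ∀ x, 0 ≤ f x) (hq : 0 < q) (hqa : q ≤ a) (hpa : ∀ᵐ x ∂μ, a ≤ p x)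
    (hpb : ∀ᵐ x ∂μ, p x ≤ b) (hs : 0 < s) (hsL : ∀ r, a ≤ r → r ≤ b → (s ^ r)⁻¹ ≤ μ.real Set.univ)
    (hfp : Integrable (fun x => f x ^ p x) μ) (hfp1 : ∫ x, f x ^ p x ∂μ ≤ 1) :
    ∫ x, f x ^ q ∂μ ≤ s ^ q * μ.real Set.univ * (q / a + 1 - q / b) := by
  set L := μ.real Set.univ
  have ha : 0 < a := hq.trans_le hqa
  have hpt : ∀ᵐ x ∂μ, f x ^ q ≤ s ^ q * (q / a * L * f x ^ p x + (1 - q / b)) := by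
    filter_upwards [hpa, hpb] with x hax hbx
    refine (rpow_le_scaled_young (hf x) hs hq (hqa.trans hax)).trans
      (mul_le_mul_of_nonneg_left (add_le_add ?_ ?_) (by positivity))
    · have hfx := Real.rpow_nonneg (hf x) (p x)
      gcongr
      exact hsL _ hax hbx
    · have hpx := ha.trans_le hax
      gcongr
  calc ∫ x, f x ^ q ∂μ ≤ ∫ x, s ^ q * (q / a * L * f x ^ p x + (1 - q / b)) ∂μ :=
        integral_mono_of_nonneg (ae_of_all _ fun x => Real.rpow_nonneg (hf x) _)
          (((hfp.const_mul _).add (integrable_const _)).const_mul _) hpt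
    _ = s ^ q * (q / a * L * ∫ x, f x ^ p x ∂μ + L * (1 - q / b)) := by
        rw [integral_const_mul, integral_add (hfp.const_mul _) (integrable_const _),
          integral_const_mul, integral_const, smul_eq_mul]
    _ ≤ s ^ q * (q / a * L * 1 + L * (1 - q / b)) := by gcongr
    _ = s ^ q * L * (q / a + 1 - q / b) := by ring

lemma rpow_integral_abs_rpow_le_mul_luxNorm [IsFiniteMeasure μ] {a b q β : ℝ}
    (hμ : 0 < μ.real Set.univ) (hu : Measurable u) (hp : Measurable p)
    (hpa : ∀ᵐ x ∂μ, a ≤ p x) (hpb : ∀ᵐ x ∂μ, p x ≤ b) (ha : 1 ≤ a) (hab : a ≤ b)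
    (hbβ : b ≤ β * a) (hq : 0 < q) (hqa : q ≤ a)
    (hup : Integrable (fun x => |u x| ^ p x) μ) :
    (∫ x, |u x| ^ q ∂μ) ^ (1 / q) ≤
      max (μ.real Set.univ ^ (1 / q - 1 / a)) (μ.real Set.univ ^ (β * (1 / q - 1 / b))) *
        (1 + q / b * (β - 1)) ^ (1 / q) * luxNorm μ p u := by
  set L := μ.real Set.univ
  set M := max (L ^ (1 / q - 1 / a)) (L ^ (β * (1 / q - 1 / b)))
  have ha0 : 0 < a := one_pos.trans_le ha
  have hβ : 1 ≤ β := by nlinarith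
  have hK : 0 < q / a + 1 - q / b := by
    have : q / b ≤ 1 := (div_le_one (ha0.trans_le hab)).2 (hqa.trans hab)
    have : 0 < q / a := by positivity
    linarith
  have hKβ := div_add_one_sub_div_le hq.le ha0 hab hbβ
  obtain ⟨s, hs, hsL, hsM⟩ := exists_rpow_scale hμ ha0 hab hq (hqa.trans hab) hβ
  have hM : 0 < M := lt_max_of_lt_left (Real.rpow_pos_of_pos hμ _)
  refine le_mul_luxNorm (mul_pos hM (Real.rpow_pos_of_pos (hK.trans_le hKβ) _))
    (exists_integral_div_rpow_le_one (hpa.mono fun x hx => ha.trans hx) hup) fun l hl hl1 => ?_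
  have hmod := integral_rpow_le_of_integral_rpow_le_one (f := fun x => |u x| / l)
    (fun x => by positivity) hq hqa hpa hpb hs hsL (hup.div_rpow_of_ae_mem_Icc hu hp hpa hpb hl) hl1
  simp_rw [Real.div_rpow (abs_nonneg (u _)) hl.le, integral_div,
    div_le_iff₀ (Real.rpow_pos_of_pos hl q)] at hmod
  calc (∫ x, |u x| ^ q ∂μ) ^ (1 / q) ≤ ((s * l) ^ q * (L * (q / a + 1 - q / b))) ^ (1 / q) := by
        gcongr
        rw [Real.mul_rpow hs.le hl.le]
        linarith
    _ = l * (s * L ^ (1 / q)) * (q / a + 1 - q / b) ^ (1 / q) := by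
        rw [Real.mul_rpow (by positivity) (by positivity), ← Real.rpow_mul (by positivity),
          mul_one_div_cancel hq.ne', Real.rpow_one, Real.mul_rpow hμ.le hK.le]
        ring
    _ ≤ l * M * (1 + q / b * (β - 1)) ^ (1 / q) := by gcongr
    _ = M * (1 + q / b * (β - 1)) ^ (1 / q) * l := by ring

end Luxemburg

theorem stmt3_general {N : ℕ} (Ω : Set (Fin N → ℝ))
    (hΩfin : volume Ω < ⊤)
    (p : (Fin N → ℝ) → ℝ) (hpmeas : Measurable p)
    (hp1 : ∀ᵐ x ∂(volume.restrict Ω), 1 ≤ p x)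
    (B : ℝ) (hpB : ∀ᵐ x ∂(volume.restrict Ω), p x ≤ B)
    (β : ℝ)
    (hpβ : essSup p (volume.restrict Ω) ≤ β * essInf p (volume.restrict Ω))
    (u : (Fin N → ℝ) → ℝ) (hu : Measurable u)
    (huLp : Integrable (fun x => |u x| ^ p x) (volume.restrict Ω))
    (q : ℝ) (hq1 : 1 ≤ q) (hq : q ≤ essInf p (volume.restrict Ω)) :
    Integrable (fun x => |u x| ^ q) (volume.restrict Ω) ∧
    (∫ x in Ω, |u x| ^ q) ^ (1 / q)
      ≤ max ((volume Ω).toReal ^ (1 / q - 1 / essInf p (volume.restrict Ω)))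
            ((volume Ω).toReal ^ (β * (1 / q - 1 / essSup p (volume.restrict Ω))))
        * (1 + q / essSup p (volume.restrict Ω) * (β - 1)) ^ (1 / q)
        * luxNorm (volume.restrict Ω) p u := by
  have hq0 : 0 < q := one_pos.trans_le hq1
  by_cases hΩ0 : volume Ω = 0
  · simp [Measure.restrict_eq_zero.2 hΩ0, luxNorm_zero_measure, hq0.ne']
  set μ := volume.restrict Ω
  have : IsFiniteMeasure μ := isFiniteMeasure_restrict.2 hΩfin.ne
  have : NeBot (ae μ) := ae_neBot.2 (mt Measure.restrict_eq_zero.1 hΩ0)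
  have hL : μ.real Set.univ = (volume Ω).toReal := measureReal_restrict_apply_univ Ω
  have hbdd_above : IsBoundedUnder (· ≤ ·) (ae μ) p := ⟨B, hpB⟩
  have hbdd_below : IsBoundedUnder (· ≥ ·) (ae μ) p := ⟨1, hp1⟩
  have hpm1 : 1 ≤ essInf p μ := le_essInf_of_ae_le 1 hp1 hbdd_above.isCoboundedUnder_ge
  refine ⟨huLp.abs_rpow_of_ae_le hu hq0.le
    ((ae_essInf_le hbdd_below).mono fun x hx => hq.trans hx), ?_⟩
  rw [← hL]
  exact rpow_integral_abs_rpow_le_mul_luxNorm (hL ▸ ENNReal.toReal_pos hΩ0 hΩfin.ne) hu hpmeas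
    (ae_essInf_le hbdd_below) (ae_le_essSup hbdd_above) hpm1
    (liminf_le_limsup hbdd_above hbdd_below) hpβ hq0 hq huLp

/-- if `p⁺ ≤ β p⁻` then for `1 ≤ q ≤ p⁻`, `u ∈ L^{p(·)}` lies in `L^q` and
`‖u‖_q ≤ max{ℒ(Ω)^{1/q−1/p⁻}, ℒ(Ω)^{β(1/q−1/p⁺)}} (1 + (q/p⁺)(β−1))^{1/q} ‖u‖_{p(·)}`. -/
theorem stmt3 {N : ℕ} (Ω : Set (Fin N → ℝ)) (hΩm : MeasurableSet Ω)
    (hΩfin : volume Ω < ⊤)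
    (p : (Fin N → ℝ) → ℝ) (hpmeas : Measurable p)
    (hp1 : ∀ᵐ x ∂(volume.restrict Ω), 1 ≤ p x)
    (B : ℝ) (hpB : ∀ᵐ x ∂(volume.restrict Ω), p x ≤ B)
    (β : ℝ) (hβ : 1 < β)
    (hpβ : essSup p (volume.restrict Ω) ≤ β * essInf p (volume.restrict Ω))
    (u : (Fin N → ℝ) → ℝ) (hu : Measurable u)
    (huLp : Integrable (fun x => |u x| ^ p x) (volume.restrict Ω))
    (q : ℝ) (hq1 : 1 ≤ q) (hq : q ≤ essInf p (volume.restrict Ω)) :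
    Integrable (fun x => |u x| ^ q) (volume.restrict Ω) ∧
    (∫ x in Ω, |u x| ^ q) ^ (1 / q)
      ≤ max ((volume Ω).toReal ^ (1 / q - 1 / essInf p (volume.restrict Ω)))
            ((volume Ω).toReal ^ (β * (1 / q - 1 / essSup p (volume.restrict Ω))))
        * (1 + q / essSup p (volume.restrict Ω) * (β - 1)) ^ (1 / q)
        * luxNorm (volume.restrict Ω) p u :=
  stmt3_general Ω hΩfin p hpmeas hp1 B hpB β hpβ u hu huLp q hq1 hq
end

section
/- Let Ω ⊆ ℝ^N have finite positive measure and let (p_n) be a sequence of measurable exponents p_n: Ω → (1,∞) with p_n⁻ := ess inf p_n → +∞ and p_n⁺ ≤ β p_n⁻ for a fixed β > 1. Then for every u ∈ L^∞(Ω), the Luxemburg norms converge: lim_{n→∞} ‖u‖_{p_n(·)} = ‖u‖_∞. -/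
/-!
Write `M = ‖u‖_∞` and `q_n = p_n⁻`. For `l > M` the modular `∫ (|u| / l) ^ p_n` is at most
`|Ω| (M / l) ^ q_n → 0`, so eventually `‖u‖_{p_n(·)} ≤ l`. For `b < c < M` the set `{|u| > c}`
has positive measure, and for `l < b` Markov's inequality bounds the modular below by
`(c / b) ^ q_n |{|u| > c}| → ∞`, so eventually `‖u‖_{p_n(·)} ≥ b`. The lower bound needs the
modular to be integrable (otherwise the Bochner integral is `0`), which the a.e. bound on each
`p_n` provides.
-/

open MeasureTheory Filter

open Topology Set
open scoped ENNReal

section Luxemburg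

variable {α : Type*} [MeasurableSpace α] {μ : Measure α}

lemma MeasureTheory.MemLp.isBoundedUnder_abs_of_top {u : α → ℝ} (hu : MemLp u ∞ μ) :
    IsBoundedUnder (· ≤ ·) (ae μ) fun x => |u x| := by
  obtain ⟨C, hC⟩ := eLpNormEssSup_lt_top_iff_isBoundedUnder.mp
    (by simpa using hu.eLpNorm_lt_top)
  refine isBoundedUnder_of_eventually_le (a := (C : ℝ)) ?_
  filter_upwards [eventually_map.mp hC] with x hx
  exact_mod_cast hx

lemma MeasureTheory.MemLp.ae_abs_le_essSup {u : α → ℝ} (hu : MemLp u ∞ μ) :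
    ∀ᵐ x ∂μ, |u x| ≤ essSup (fun x => |u x|) μ :=
  ae_le_essSup hu.isBoundedUnder_abs_of_top

lemma MeasureTheory.MemLp.essSup_abs_nonneg [NeZero μ] {u : α → ℝ} (hu : MemLp u ∞ μ) :
    0 ≤ essSup (fun x => |u x|) μ :=
  let ⟨_, hx⟩ := hu.ae_abs_le_essSup.exists
  (abs_nonneg _).trans hx

lemma ae_essInf_le_of_nonneg {f : α → ℝ} (hf : ∀ᵐ x ∂μ, 0 ≤ f x) :
    ∀ᵐ x ∂μ, essInf f μ ≤ f x :=
  ae_essInf_le ⟨0, eventually_map.mpr hf⟩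

lemma measureReal_setOf_lt_pos_of_lt_essSup [IsFiniteMeasure μ] [NeZero μ] {f : α → ℝ}
    (hf : IsBoundedUnder (· ≥ ·) (ae μ) f) {c : ℝ} (hc : c < essSup f μ) :
    0 < μ.real {x | c < f x} := by
  refine measureReal_nonneg.lt_of_ne' fun h => hc.not_ge ?_
  refine essSup_le_of_ae_le c ?_ hf.isCoboundedUnder_le
  rw [EventuallyLE, ae_iff]
  simpa only [not_le] using (measureReal_eq_zero_iff (measure_ne_top _ _)).mp h

lemma integrable_rpow_of_ae_le [IsFiniteMeasure μ] {g p : α → ℝ} (hg : AEMeasurable g μ)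
    (hp : AEMeasurable p μ) {C B : ℝ} (hg0 : ∀ᵐ x ∂μ, 0 ≤ g x) (hgC : ∀ᵐ x ∂μ, g x ≤ C)
    (hp0 : ∀ᵐ x ∂μ, 0 ≤ p x) (hpB : ∀ᵐ x ∂μ, p x ≤ B) :
    Integrable (fun x => g x ^ p x) μ := by
  refine (integrable_const (max 1 (C ^ max B 0))).mono' (hg.pow hp).aestronglyMeasurable ?_
  filter_upwards [hg0, hgC, hp0, hpB] with x hg0 hgC hp0 hpB
  rw [Real.norm_of_nonneg (Real.rpow_nonneg hg0 _)]
  rcases le_or_gt (g x) 1 with h | h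
  · exact le_max_of_le_left (Real.rpow_le_one hg0 h hp0)
  · refine le_max_of_le_right ?_
    calc g x ^ p x ≤ g x ^ max B 0 :=
          Real.rpow_le_rpow_of_exponent_le h.le (hpB.trans (le_max_left _ _))
      _ ≤ C ^ max B 0 := Real.rpow_le_rpow hg0 hgC (le_max_right _ _)

variable {p u : α → ℝ}

lemma luxNorm_nonneg : 0 ≤ luxNorm μ p u :=
  Real.sInf_nonneg fun _ hl => hl.1.le

lemma luxNorm_le {l : ℝ} (hl : 0 < l) (h : ∫ x, (|u x| / l) ^ p x ∂μ ≤ 1) :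
    luxNorm μ p u ≤ l :=
  csInf_le ⟨0, fun _ hl => hl.1.le⟩ ⟨hl, h⟩

lemma le_luxNorm {b l₀ : ℝ} (hl₀ : 0 < l₀) (h₀ : ∫ x, (|u x| / l₀) ^ p x ∂μ ≤ 1)
    (h : ∀ l, 0 < l → l < b → 1 < ∫ x, (|u x| / l) ^ p x ∂μ) : b ≤ luxNorm μ p u :=
  le_csInf ⟨l₀, hl₀, h₀⟩ fun l ⟨hl, hle⟩ => not_lt.mp fun hlb => (h l hl hlb).not_ge hle

variable [IsFiniteMeasure μ] {q : ℝ}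

lemma integral_rpow_div_le {M l : ℝ} (hq : 0 ≤ q) (hqp : ∀ᵐ x ∂μ, q ≤ p x) (hl : 0 < l)
    (hM : 0 ≤ M) (hMl : M ≤ l) (hu : ∀ᵐ x ∂μ, |u x| ≤ M) :
    ∫ x, (|u x| / l) ^ p x ∂μ ≤ μ.real univ * (M / l) ^ q := by
  have hbound : ∀ᵐ x ∂μ, (|u x| / l) ^ p x ≤ (M / l) ^ q := by
    filter_upwards [hqp, hu] with x hqx hux
    calc (|u x| / l) ^ p x ≤ (M / l) ^ p x := by gcongr; exact hq.trans hqx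
      _ ≤ (M / l) ^ q := Real.rpow_le_rpow_of_exponent_ge' (by positivity)
          ((div_le_one hl).mpr hMl) hq hqx
  calc ∫ x, (|u x| / l) ^ p x ∂μ ≤ ∫ _, (M / l) ^ q ∂μ :=
        integral_mono_of_nonneg (ae_of_all _ fun x => by positivity) (integrable_const _) hbound
    _ = μ.real univ * (M / l) ^ q := by rw [integral_const, smul_eq_mul]

lemma rpow_mul_measureReal_le_integral {b c l : ℝ} (hq : 0 ≤ q) (hqp : ∀ᵐ x ∂μ, q ≤ p x)
    (hl : 0 < l) (hlb : l ≤ b) (hbc : b ≤ c)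
    (hint : Integrable (fun x => (|u x| / l) ^ p x) μ) :
    (c / b) ^ q * μ.real {x | c < |u x|} ≤ ∫ x, (|u x| / l) ^ p x ∂μ := by
  have hb : 0 < b := hl.trans_le hlb
  have hsub : {x | c < |u x|} ≤ᵐ[μ] {x | (c / b) ^ q ≤ (|u x| / l) ^ p x} := by
    filter_upwards [hqp] with x hqx hx
    have hcb : 1 ≤ c / b := (one_le_div hb).mpr hbc
    calc (c / b) ^ q ≤ (c / b) ^ p x := Real.rpow_le_rpow_of_exponent_le hcb hqx
      _ ≤ (|u x| / l) ^ p x := by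
          gcongr
          · exact hq.trans hqx
          · exact (show c < |u x| from hx).le
  calc (c / b) ^ q * μ.real {x | c < |u x|}
      ≤ (c / b) ^ q * μ.real {x | (c / b) ^ q ≤ (|u x| / l) ^ p x} := by
        refine mul_le_mul_of_nonneg_left ?_
          (Real.rpow_nonneg (div_nonneg (hb.le.trans hbc) hb.le) _)
        exact ENNReal.toReal_mono (measure_ne_top _ _) (measure_mono_ae hsub)
    _ ≤ ∫ x, (|u x| / l) ^ p x ∂μ :=
        mul_meas_ge_le_integral_of_nonneg (ae_of_all _ fun x => by positivity) hint _

end Luxemburg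

section Sequence

variable {α : Type*} [MeasurableSpace α] {μ : Measure α} [IsFiniteMeasure μ] [NeZero μ]
  {p : ℕ → α → ℝ} {u : α → ℝ}
variable (hp0 : ∀ n, ∀ᵐ x ∂μ, 0 ≤ p n x)
  (hdiv : Tendsto (fun n => essInf (p n) μ) atTop atTop) (hu : MemLp u ∞ μ)
include hp0 hdiv hu

lemma eventually_integral_rpow_div_le_one {l : ℝ} (hl : essSup (fun x => |u x|) μ < l) :
    ∀ᶠ n in atTop, ∫ x, (|u x| / l) ^ p n x ∂μ ≤ 1 := by
  set M := essSup (fun x => |u x|) μ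
  have hM : 0 ≤ M := hu.essSup_abs_nonneg
  have hl0 : 0 < l := hM.trans_lt hl
  have hsmall : Tendsto (fun n => μ.real univ * (M / l) ^ essInf (p n) μ) atTop (𝓝 0) := by
    have hbase := tendsto_rpow_atTop_of_base_lt_one (M / l)
      (by linarith [div_nonneg hM hl0.le]) ((div_lt_one hl0).mpr hl)
    simpa using (hbase.comp hdiv).const_mul (μ.real univ)
  filter_upwards [hsmall.eventually_le_const zero_lt_one, hdiv.eventually_ge_atTop 0]
    with n hn hq
  exact (integral_rpow_div_le hq (ae_essInf_le_of_nonneg (hp0 n)) hl0 hM hl.le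
    hu.ae_abs_le_essSup).trans hn

lemma eventually_luxNorm_lt {a : ℝ} (ha : essSup (fun x => |u x|) μ < a) :
    ∀ᶠ n in atTop, luxNorm μ (p n) u < a := by
  set M := essSup (fun x => |u x|) μ
  have hl : M < (M + a) / 2 := by linarith
  filter_upwards [eventually_integral_rpow_div_le_one hp0 hdiv hu hl] with n hn
  exact (luxNorm_le (hu.essSup_abs_nonneg.trans_lt hl) hn).trans_lt (by linarith)

lemma eventually_lt_luxNorm (hpm : ∀ n, AEMeasurable (p n) μ)
    (hpB : ∀ n, ∃ B : ℝ, ∀ᵐ x ∂μ, p n x ≤ B) {a : ℝ} (ha : a < essSup (fun x => |u x|) μ) :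
    ∀ᶠ n in atTop, a < luxNorm μ (p n) u := by
  rcases lt_or_ge a 0 with ha0 | ha0
  · exact Eventually.of_forall fun n => ha0.trans_le luxNorm_nonneg
  set M := essSup (fun x => |u x|) μ
  obtain ⟨b, c, hab, hbc, hcM⟩ : ∃ b c, a < b ∧ b < c ∧ c < M :=
    ⟨(2 * a + M) / 3, (a + 2 * M) / 3, by linarith, by linarith, by linarith⟩
  have hb : 0 < b := by linarith
  have hA : 0 < μ.real {x | c < |u x|} :=
    measureReal_setOf_lt_pos_of_lt_essSup
      ⟨0, eventually_map.mpr (ae_of_all _ fun x => abs_nonneg (u x))⟩ hcM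
  have hlarge : Tendsto (fun n => (c / b) ^ essInf (p n) μ * μ.real {x | c < |u x|})
      atTop atTop :=
    ((tendsto_rpow_atTop_of_base_gt_one _ ((one_lt_div hb).mpr hbc)).comp hdiv).atTop_mul_const hA
  filter_upwards [hlarge.eventually_gt_atTop 1, hdiv.eventually_ge_atTop 0,
    eventually_integral_rpow_div_le_one hp0 hdiv hu (lt_add_one M)] with n hn hq h₀
  refine hab.trans_le (le_luxNorm (by linarith [hu.essSup_abs_nonneg]) h₀ fun l hl hlb => ?_)
  obtain ⟨B, hB⟩ := hpB n
  have hint : Integrable (fun x => (|u x| / l) ^ p n x) μ :=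
    integrable_rpow_of_ae_le (hu.1.aemeasurable.norm.div_const l) (hpm n)
      (ae_of_all _ fun x => by positivity)
      (hu.ae_abs_le_essSup.mono fun x hx => div_le_div_of_nonneg_right hx hl.le) (hp0 n) hB
  exact hn.trans_le (rpow_mul_measureReal_le_integral hq (ae_essInf_le_of_nonneg (hp0 n)) hl
    hlb.le hbc.le hint)

theorem tendsto_luxNorm_essSup (hpm : ∀ n, AEMeasurable (p n) μ)
    (hpB : ∀ n, ∃ B : ℝ, ∀ᵐ x ∂μ, p n x ≤ B) :
    Tendsto (fun n => luxNorm μ (p n) u) atTop (𝓝 (essSup (fun x => |u x|) μ)) :=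
  tendsto_order.2 ⟨fun _ ha => eventually_lt_luxNorm hp0 hdiv hu hpm hpB ha,
    fun _ ha => eventually_luxNorm_lt hp0 hdiv hu ha⟩

end Sequence

theorem stmt4_general {N : ℕ} (Ω : Set (Fin N → ℝ))
    (hΩpos : 0 < volume Ω) (hΩfin : volume Ω < ⊤)
    (p : ℕ → (Fin N → ℝ) → ℝ) (hpmeas : ∀ n, Measurable (p n))
    (hp1 : ∀ n, ∀ᵐ x ∂(volume.restrict Ω), 1 < p n x)
    (hpB : ∀ n, ∃ B : ℝ, ∀ᵐ x ∂(volume.restrict Ω), p n x ≤ B)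
    (hdiv : Tendsto (fun n => essInf (p n) (volume.restrict Ω)) atTop atTop)
    (u : (Fin N → ℝ) → ℝ)
    (huB : MemLp u ⊤ (volume.restrict Ω)) :
    Tendsto (fun n => luxNorm (volume.restrict Ω) (p n) u) atTop
      (nhds (essSup (fun x => |u x|) (volume.restrict Ω))) := by
  have : IsFiniteMeasure (volume.restrict Ω) := isFiniteMeasure_restrict.mpr hΩfin.ne
  have : NeZero (volume.restrict Ω) := ⟨Measure.restrict_eq_zero.not.mpr hΩpos.ne'⟩
  exact tendsto_luxNorm_essSup (fun n => (hp1 n).mono fun _ hx => by linarith) hdiv huB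
    (fun n => (hpmeas n).aemeasurable) hpB

/-- if `p_n⁻ → ∞` and `p_n⁺ ≤ β p_n⁻`, then for every `u ∈ L^∞(Ω)` the
Luxemburg norms converge to the essential supremum norm: `‖u‖_{p_n(·)} → ‖u‖_∞`. -/
theorem stmt4 {N : ℕ} (Ω : Set (Fin N → ℝ)) (hΩm : MeasurableSet Ω)
    (hΩpos : 0 < volume Ω) (hΩfin : volume Ω < ⊤)
    (p : ℕ → (Fin N → ℝ) → ℝ) (hpmeas : ∀ n, Measurable (p n))
    (hp1 : ∀ n, ∀ᵐ x ∂(volume.restrict Ω), 1 < p n x)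
    (hpB : ∀ n, ∃ B : ℝ, ∀ᵐ x ∂(volume.restrict Ω), p n x ≤ B)
    (β : ℝ) (hβ : 1 < β)
    (hpβ : ∀ n, essSup (p n) (volume.restrict Ω) ≤ β * essInf (p n) (volume.restrict Ω))
    (hdiv : Tendsto (fun n => essInf (p n) (volume.restrict Ω)) atTop atTop)
    (u : (Fin N → ℝ) → ℝ) (hu : Measurable u)
    (huB : MemLp u ⊤ (volume.restrict Ω)) :
    Tendsto (fun n => luxNorm (volume.restrict Ω) (p n) u) atTop
      (nhds (essSup (fun x => |u x|) (volume.restrict Ω))) :=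
  stmt4_general Ω hΩpos hΩfin p hpmeas hp1 hpB hdiv u huB
end

section
/- Let Ω have finite measure, let (p_n) satisfy p_n⁻ → ∞ and p_n⁺ ≤ β p_n⁻ (β > 1), and suppose (h_n) are nonnegative measurable functions on Ω with ∫_Ω (1/p_n(x)) h_n(x)^{p_n(x)} dx ≤ 2M for all n, where M < ∞. Then the Luxemburg norms ‖h_n‖_{p_n(·)} are bounded and liminf_{n→∞} ‖h_n‖_{p_n(·)} ≤ 1. -/
open MeasureTheory Filter Topology

private lemma modular_le_one {α : Type*} [MeasurableSpace α] {μ : Measure α}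
    {p h : α → ℝ} {pm pM M l : ℝ}
    (hlow : ∀ᵐ x ∂μ, pm ≤ p x) (hhi : ∀ᵐ x ∂μ, p x ≤ pM)
    (hp1 : ∀ᵐ x ∂μ, 1 < p x) (hh0 : ∀ᵐ x ∂μ, 0 ≤ h x)
    (hint : Integrable (fun x => (1 / p x) * h x ^ p x) μ)
    (hM : ∫ x, (1 / p x) * h x ^ p x ∂μ ≤ 2 * M)
    (hpM0 : 0 ≤ pM)
    (hl : 1 ≤ l) (hlp : 2 * M * pM ≤ l ^ pm) :
    ∫ x, (|h x| / l) ^ p x ∂μ ≤ 1 := by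
  have hl0 : (0 : ℝ) < l := zero_lt_one.trans_le hl
  have hlpm : (0 : ℝ) < l ^ pm := Real.rpow_pos_of_pos hl0 pm
  have hptwise : ∀ᵐ x ∂μ, (|h x| / l) ^ p x ≤ (pM / l ^ pm) * ((1 / p x) * h x ^ p x) := by
    filter_upwards [hlow, hhi, hp1, hh0] with x h1 h2 h3 h4
    have hpx : (0 : ℝ) < p x := zero_lt_one.trans h3
    rw [abs_of_nonneg h4, Real.div_rpow h4 hl0.le]
    have hexp : l ^ pm ≤ l ^ p x := Real.rpow_le_rpow_of_exponent_le hl h1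
    have hnum : (0:ℝ) ≤ h x ^ p x := Real.rpow_nonneg h4 _
    calc h x ^ p x / l ^ p x ≤ h x ^ p x / l ^ pm := by gcongr
      _ = (p x / l ^ pm) * ((1 / p x) * h x ^ p x) := by field_simp
      _ ≤ (pM / l ^ pm) * ((1 / p x) * h x ^ p x) := by
          apply mul_le_mul_of_nonneg_right
          · gcongr
          · exact mul_nonneg (by positivity) hnum
  calc ∫ x, (|h x| / l) ^ p x ∂μ
      ≤ ∫ x, (pM / l ^ pm) * ((1 / p x) * h x ^ p x) ∂μ := by
        apply integral_mono_of_nonneg _ (hint.const_mul _) hptwise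
        filter_upwards with x
        exact Real.rpow_nonneg (div_nonneg (abs_nonneg _) hl0.le) _
    _ = (pM / l ^ pm) * ∫ x, (1 / p x) * h x ^ p x ∂μ := integral_const_mul _ _
    _ ≤ (pM / l ^ pm) * (2 * M) := by
        apply mul_le_mul_of_nonneg_left hM (div_nonneg hpM0 hlpm.le)
    _ ≤ 1 := by
        rw [div_mul_eq_mul_div, div_le_one hlpm]
        nlinarith [hlp]

private lemma tendsto_aux {c : ℝ} (hc : 0 < c) :
    Tendsto (fun t : ℝ => (c * t) ^ t⁻¹) atTop (𝓝 1) := by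
  have A : Tendsto (fun t : ℝ => t ^ t⁻¹) atTop (𝓝 1) := by
    simpa [one_div] using tendsto_rpow_div
  have B : Tendsto (fun t : ℝ => c ^ t⁻¹) atTop (𝓝 1) := by
    have h1 : Tendsto (fun t : ℝ => Real.log c * t⁻¹) atTop (𝓝 0) := by
      simpa using tendsto_inv_atTop_zero.const_mul (Real.log c)
    have h2 : Tendsto (fun t : ℝ => Real.exp (Real.log c * t⁻¹)) atTop (𝓝 (Real.exp 0)) :=
      (Real.continuous_exp.tendsto _).comp h1
    simpa [Real.exp_zero, Real.rpow_def_of_pos hc] using h2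
  have := B.mul A
  rw [one_mul] at this
  apply this.congr'
  filter_upwards [eventually_ge_atTop (0:ℝ)] with t ht
  rw [← Real.mul_rpow hc.le ht]

/-- a uniform bound `∫_Ω (1/p_n) h_n^{p_n} ≤ 2M` on the weighted modulars
implies that the Luxemburg norms `‖h_n‖_{p_n(·)}` are bounded and
`liminf_n ‖h_n‖_{p_n(·)} ≤ 1`. -/
theorem stmt15 {N : ℕ} (Ω : Set (Fin N → ℝ)) (hΩm : MeasurableSet Ω)
    (hΩfin : volume Ω < ⊤)
    (p : ℕ → (Fin N → ℝ) → ℝ) (hpmeas : ∀ n, Measurable (p n))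
    (hp1 : ∀ n, ∀ᵐ x ∂(volume.restrict Ω), 1 < p n x)
    (hpB : ∀ n, ∃ B : ℝ, ∀ᵐ x ∂(volume.restrict Ω), p n x ≤ B)
    (β : ℝ) (hβ : 1 < β)
    (hpβ : ∀ n, essSup (p n) (volume.restrict Ω) ≤ β * essInf (p n) (volume.restrict Ω))
    (hdiv : Tendsto (fun n => essInf (p n) (volume.restrict Ω)) atTop atTop)
    (h : ℕ → (Fin N → ℝ) → ℝ) (hhmeas : ∀ n, Measurable (h n))
    (hh0 : ∀ n, ∀ᵐ x ∂(volume.restrict Ω), 0 ≤ h n x)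
    (hhint : ∀ n, Integrable (fun x => (1 / p n x) * h n x ^ p n x) (volume.restrict Ω))
    (M : ℝ)
    (hbound : ∀ n, ∫ x in Ω, (1 / p n x) * h n x ^ p n x ≤ 2 * M) :
    (∃ C : ℝ, ∀ n, luxNorm (volume.restrict Ω) (p n) (h n) ≤ C) ∧
      liminf (fun n => luxNorm (volume.restrict Ω) (p n) (h n)) atTop ≤ 1 := by
  set μ := volume.restrict Ω with hμdef
  -- the measure is nonzero, otherwise essInf would be constantly 0
  have hμ : μ ≠ 0 := by
    intro h0
    obtain ⟨n0, hn0⟩ := (hdiv.eventually_ge_atTop 1).exists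
    rw [h0] at hn0
    have hz : essInf (p n0) (0 : Measure _) = 0 := by
      simp [essInf, ae_zero, liminf, limsInf, Real.sSup_univ]
    rw [hz] at hn0
    linarith
  haveI hne : NeBot (ae μ) := ae_neBot.2 hμ
  set pm : ℕ → ℝ := fun n => essInf (p n) μ with hpmdef
  set pM : ℕ → ℝ := fun n => essSup (p n) μ with hpMdef
  have hbd_above : ∀ n, IsBoundedUnder (· ≤ ·) (ae μ) (p n) := fun n => by
    obtain ⟨B, hB⟩ := hpB n; exact ⟨B, eventually_map.2 hB⟩
  have hbd_below : ∀ n, IsBoundedUnder (· ≥ ·) (ae μ) (p n) := fun n =>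
    ⟨1, eventually_map.2 ((hp1 n).mono fun x hx => hx.le)⟩
  have hlow : ∀ n, ∀ᵐ x ∂μ, pm n ≤ p n x := fun n => ae_essInf_le (hbd_below n)
  have hhi : ∀ n, ∀ᵐ x ∂μ, p n x ≤ pM n := fun n => ae_le_essSup (hbd_above n)
  have h1pm : ∀ n, 1 ≤ pm n := fun n =>
    le_liminf_of_le ((hbd_above n).isCoboundedUnder_ge)
      (eventually_map.2 ((hp1 n).mono fun x hx => hx.le))
  have hpmM : ∀ n, pm n ≤ pM n := fun n =>
    liminf_le_limsup (hbd_above n) (hbd_below n)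
  have hpM0 : ∀ n, 0 ≤ pM n := fun n => le_trans (by linarith [h1pm n]) (hpmM n)
  -- 2M is nonnegative
  have hM0 : (0:ℝ) ≤ 2 * M := by
    refine le_trans ?_ (hbound 0)
    apply integral_nonneg_of_ae
    filter_upwards [hp1 0, hh0 0] with x h1 h2
    exact mul_nonneg (by positivity) (Real.rpow_nonneg h2 _)
  set c : ℝ := 2 * M * β + 1 with hcdef
  have hc0 : (0:ℝ) < c := by nlinarith
  set u : ℕ → ℝ := fun n => max 1 ((c * pm n) ^ (pm n)⁻¹) with hudef
  -- the key estimate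
  have hkey : ∀ n, luxNorm μ (p n) (h n) ≤ u n := by
    intro n
    have hpm0 : (0:ℝ) < pm n := lt_of_lt_of_le zero_lt_one (h1pm n)
    have hu1 : (1:ℝ) ≤ u n := le_max_left _ _
    have hupos : (0:ℝ) < u n := zero_lt_one.trans_le hu1
    have hcpm : (0:ℝ) ≤ c * pm n := by positivity
    have hlp : 2 * M * pM n ≤ u n ^ pm n := by
      have step1 : 2 * M * pM n ≤ c * pm n := by
        have := hpβ n
        nlinarith [h1pm n, hpM0 n, hM0]
      have step2 : c * pm n = ((c * pm n) ^ (pm n)⁻¹) ^ pm n :=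
        (Real.rpow_inv_rpow hcpm hpm0.ne').symm
      have step3 : ((c * pm n) ^ (pm n)⁻¹) ^ pm n ≤ u n ^ pm n :=
        Real.rpow_le_rpow (Real.rpow_nonneg hcpm _) (le_max_right _ _) hpm0.le
      calc 2 * M * pM n ≤ c * pm n := step1
        _ = ((c * pm n) ^ (pm n)⁻¹) ^ pm n := step2
        _ ≤ u n ^ pm n := step3
    have hmem : u n ∈ {l : ℝ | 0 < l ∧ ∫ x, (|h n x| / l) ^ p n x ∂μ ≤ 1} :=
      ⟨hupos, modular_le_one (hlow n) (hhi n) (hp1 n) (hh0 n) (hhint n) (hbound n)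
        (hpM0 n) hu1 hlp⟩
    exact csInf_le ⟨0, fun x hx => hx.1.le⟩ hmem
  -- u tends to 1
  have hutend : Tendsto u atTop (𝓝 1) := by
    have h1 : Tendsto (fun n => (c * pm n) ^ (pm n)⁻¹) atTop (𝓝 1) :=
      (tendsto_aux hc0).comp hdiv
    have h2 : Tendsto u atTop (𝓝 (max 1 1)) := tendsto_const_nhds.max h1
    simpa using h2
  constructor
  · obtain ⟨C, hC⟩ := hutend.bddAbove_range
    exact ⟨C, fun n => (hkey n).trans (hC ⟨n, rfl⟩)⟩
  · have hlux0 : ∀ n, 0 ≤ luxNorm μ (p n) (h n) := fun n =>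
      Real.sInf_nonneg fun x hx => hx.1.le
    have h1 : liminf (fun n => luxNorm μ (p n) (h n)) atTop ≤ liminf u atTop :=
      liminf_le_liminf (Eventually.of_forall hkey)
        ⟨0, eventually_map.2 (Eventually.of_forall hlux0)⟩
        hutend.isBoundedUnder_le.isCoboundedUnder_ge
    rw [hutend.liminf_eq] at h1
    exact h1
end
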